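/- For every positive integer d, the specialization of F_d at w = 1 equals the d-th Eulerian polynomial: F_d(q, 1) = A_d(q) in ℤ[q]. -/
import Mathlib

open Finset

noncomputable def eulerian : ℕ → Polynomial ℤ
  | 0 => 1
  | e + 1 =>
      (1 + (e : Polynomial ℤ) * Polynomial.X) * eulerian e +
        Polynomial.X * (1 - Polynomial.X) * Polynomial.derivative (eulerian e)

namespace FOneAux
open MvPolynomial TrivSqZeroExt DualNumber

noncomputable def Φ : MvPolynomial (Fin 2) ℤ →ₐ[ℤ] DualNumber (Polynomial ℤ) :=
  aeval ![(inl Polynomial.X : DualNumber (Polynomial ℤ)), 1 + ε]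

lemma Φ_X0 : Φ (X 0) = inl Polynomial.X := by simp [Φ]
lemma Φ_X1 : Φ (X 1) = 1 + ε := by simp [Φ]

lemma fst_Φ (p : MvPolynomial (Fin 2) ℤ) :
    fst (Φ p) = MvPolynomial.aeval ![Polynomial.X, (1 : Polynomial ℤ)] p := by
  have h : (fstHom ℤ (Polynomial ℤ) (Polynomial ℤ)).comp Φ =
      MvPolynomial.aeval ![Polynomial.X, (1 : Polynomial ℤ)] := by
    apply MvPolynomial.algHom_ext
    intro i
    fin_cases i <;> simp [Φ]
  exact AlgHom.congr_fun h p

lemma fst_Φσ (p : MvPolynomial (Fin 2) ℤ) :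
    fst (Φ (aeval ![X 0 * X 1, X 1] p)) = fst (Φ p) := by
  have h : ((fstHom ℤ (Polynomial ℤ) (Polynomial ℤ)).comp Φ).comp
        (aeval ![X 0 * X 1, X 1]) =
      (fstHom ℤ (Polynomial ℤ) (Polynomial ℤ)).comp Φ := by
    apply MvPolynomial.algHom_ext
    intro i
    fin_cases i <;> simp [Φ]
  exact AlgHom.congr_fun h p

lemma snd_Φσ (p : MvPolynomial (Fin 2) ℤ) :
    snd (Φ (aeval ![X 0 * X 1, X 1] p)) =
      snd (Φ p) + Polynomial.X * Polynomial.derivative (fst (Φ p)) := by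
  induction p using MvPolynomial.induction_on with
  | C a => simp [Φ]
  | add p q hp hq =>
      simp only [map_add, snd_add, fst_add, Polynomial.derivative_add, hp, hq]; ring
  | mul_X p i hp =>
      fin_cases i <;>
      · simp only [Fin.mk_zero, Fin.mk_one, ← MvPolynomial.aeval_eq_bind₁, map_mul, aeval_X, Matrix.cons_val_zero, Matrix.cons_val_one,
          Matrix.head_cons, Φ_X0, Φ_X1, DualNumber.snd_mul, TrivSqZeroExt.fst_mul,
          fst_add, snd_add, fst_one, snd_one, DualNumber.fst_eps, DualNumber.snd_eps,
          fst_inl, snd_inl, fst_Φσ, hp, Polynomial.derivative_mul,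
          Polynomial.derivative_X, Polynomial.derivative_one]
        simp only [Polynomial.derivative_one, mul_zero, zero_mul, add_zero, mul_one]
        ring

lemma aeval_one_σ (p : MvPolynomial (Fin 2) ℤ) :
    MvPolynomial.aeval (R := ℤ) ![Polynomial.X, (1 : Polynomial ℤ)]
        (aeval (R := ℤ) ![X 0 * X 1, X 1] p) =
      MvPolynomial.aeval (R := ℤ) ![Polynomial.X, (1 : Polynomial ℤ)] p := by
  rw [← fst_Φ, fst_Φσ, fst_Φ]

lemma pow_one_add_eps (n : ℕ) :
    ((1 : DualNumber (Polynomial ℤ)) + ε) ^ n = inl 1 + inr (n : Polynomial ℤ) := by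
  induction n with
  | zero => simp
  | succ n ih =>
      rw [pow_succ, ih]
      ext
      · simp
      · simp [DualNumber.snd_mul]; ring

end FOneAux

/-- For every `d ≥ 1`, `F_d(q, 1) = A_d(q)` in `ℤ[q]`.
Here `F : ℕ → ℤ[q,w]` (variable `0` is `q`, variable `1` is `w`) is characterized by
`F 1 = 1` and the recurrence
`(1 - w) F_d(q,w) = (1 - q w^d) F_{d-1}(q,w) - w (1 - q) F_{d-1}(qw, w)`;
the specialization `w = 1` is the evaluation `q ↦ Polynomial.X`, `w ↦ 1`. -/
theorem F_at_one_eq_eulerian (d : ℕ) (hd : 1 ≤ d)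
    (F : ℕ → MvPolynomial (Fin 2) ℤ)
    (hF1 : F 1 = 1)
    (hFrec : ∀ e, 1 ≤ e →
      (1 - MvPolynomial.X 1) * F (e + 1) =
        (1 - MvPolynomial.X 0 * MvPolynomial.X 1 ^ (e + 1)) * F e
          - MvPolynomial.X 1 * (1 - MvPolynomial.X 0) *
            MvPolynomial.aeval ![MvPolynomial.X 0 * MvPolynomial.X 1, MvPolynomial.X 1] (F e)) :
    MvPolynomial.aeval ![Polynomial.X, (1 : Polynomial ℤ)] (F d) = eulerian d := by
  open FOneAux TrivSqZeroExt DualNumber MvPolynomial in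
  induction d, hd using Nat.le_induction with
  | base => simp [hF1, eulerian]
  | succ e he ih =>
      have h := congrArg (fun p => snd (Φ p)) (hFrec e he)
      simp only [map_mul, map_sub, map_one, map_pow, Φ_X0, Φ_X1, pow_one_add_eps,
        DualNumber.snd_mul, TrivSqZeroExt.fst_mul, fst_add, snd_add, fst_sub, snd_sub,
        fst_one, snd_one, DualNumber.fst_eps, DualNumber.snd_eps, fst_inl, snd_inl,
        fst_inr, snd_inr, fst_Φσ, snd_Φσ, fst_Φ, aeval_one_σ, ih] at h
      rw [show eulerian (e + 1) =
          (1 + (e : Polynomial ℤ) * Polynomial.X) * eulerian e +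
            Polynomial.X * (1 - Polynomial.X) * Polynomial.derivative (eulerian e) from rfl]
      push_cast at h ⊢
      linear_combination -h
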